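/- arXiv:2109.05954 — 4 statements merged into one kernel-verified Lean document; each statement's English description precedes it below -/
import Mathlib

section
/- Let G ∈ ℝ(s)^{p×m} and let (N, Ñ, M, M̃, X, X̃, Y, Ỹ) be a doubly coprime factorization of G over RH∞. Then a rational matrix K ∈ ℝ(s)^{m×p} internally stabilizes G if and only if there exists a stable Q ∈ ℝ(s)^{m×p} with det(Y + NQ) ≢ 0 and det(Ỹ + QÑ) ≢ 0 such that K = (X + MQ)(Y + NQ)^{−1} = (Ỹ + QÑ)^{−1}(X̃ + QM̃). -/
open Matrix Polynomial
open scoped Kronecker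

set_option synthInstance.maxHeartbeats 400000
set_option maxHeartbeats 1000000

noncomputable section

/-- The field ℝ(s) of real rational functions. -/
abbrev RF := RatFunc ℝ

/-- A rational function is proper if the degree of its numerator (in lowest terms)
is at most the degree of its denominator. -/
def RFproper (f : RF) : Prop := f.num.degree ≤ f.denom.degree

/-- A rational function is stable: proper and every complex root of its denominator
has strictly negative real part. -/
def RFstable (f : RF) : Prop :=
  RFproper f ∧ ∀ z : ℂ, Polynomial.aeval z f.denom = 0 → z.re < 0

/-- A rational matrix is stable (lies in RH∞) iff every entry is stable. -/
def MStable {p m : Type*} (G : Matrix p m RF) : Prop := ∀ i j, RFstable (G i j)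

/-- A real matrix viewed as a matrix over ℝ(s). -/
def toRF {p m : Type*} (M : Matrix p m ℝ) : Matrix p m RF := M.map (algebraMap ℝ RF)

/-- A real matrix viewed as a matrix over ℂ. -/
def toC {p m : Type*} (M : Matrix p m ℝ) : Matrix p m ℂ := M.map (fun x => (x : ℂ))

/-- (N, Ñ, M, M̃, X, X̃, Y, Ỹ) is a doubly coprime factorization of G over RH∞. -/
def IsDCF {p m : Type*} [Fintype p] [Fintype m] [DecidableEq p] [DecidableEq m]
    (G : Matrix p m RF)
    (N : Matrix p m RF) (Ntil : Matrix p m RF)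
    (M : Matrix m m RF) (Mtil : Matrix p p RF)
    (X : Matrix m p RF) (Xtil : Matrix m p RF)
    (Y : Matrix p p RF) (Ytil : Matrix m m RF) : Prop :=
  MStable N ∧ MStable Ntil ∧ MStable M ∧ MStable Mtil ∧
  MStable X ∧ MStable Xtil ∧ MStable Y ∧ MStable Ytil ∧
  M.det ≠ 0 ∧ Mtil.det ≠ 0 ∧ G = N * M⁻¹ ∧ G = Mtil⁻¹ * Ntil ∧
  Matrix.fromBlocks Ytil (-Xtil) (-Ntil) Mtil * Matrix.fromBlocks M X N Y = 1

/-- K internally stabilizes G : the closed-loop matrix [[I, -K],[-G, I]] has nonzero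
determinant and a stable inverse. -/
def Stabilizes {p m : Type*} [Fintype p] [Fintype m] [DecidableEq p] [DecidableEq m]
    (G : Matrix p m RF) (K : Matrix m p RF) : Prop :=
  (Matrix.fromBlocks (1 : Matrix m m RF) (-K) (-G) (1 : Matrix p p RF)).det ≠ 0 ∧
  MStable (Matrix.fromBlocks (1 : Matrix m m RF) (-K) (-G) (1 : Matrix p p RF))⁻¹


section AuxStable

lemma RFproper_iff (f : RF) : RFproper f ↔ f.intDegree ≤ 0 := by
  by_cases hf : f = 0
  · subst hf
    simp [RFproper, RatFunc.num_zero]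
  · have hn := RatFunc.num_ne_zero hf
    have hd := f.denom_ne_zero
    rw [RFproper, Polynomial.degree_eq_natDegree hn, Polynomial.degree_eq_natDegree hd,
      Nat.cast_le, RatFunc.intDegree, sub_nonpos, Int.ofNat_le]

lemma RFstable_zero : RFstable 0 := by
  constructor
  · rw [RFproper_iff]; simp
  · intro z hz
    rw [RatFunc.denom_zero] at hz
    simp at hz

lemma RFstable_one : RFstable 1 := by
  constructor
  · rw [RFproper_iff]; simp
  · intro z hz
    rw [RatFunc.denom_one] at hz
    simp at hz

lemma RFstable_add {f g : RF} (hf : RFstable f) (hg : RFstable g) : RFstable (f + g) := by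
  constructor
  · rw [RFproper_iff]
    by_cases hfg : f + g = 0
    · simp [hfg]
    by_cases hg0 : g = 0
    · simpa [hg0] using (RFproper_iff f).mp hf.1
    calc (f+g).intDegree ≤ max f.intDegree g.intDegree := RatFunc.intDegree_add_le hg0 hfg
    _ ≤ 0 := max_le ((RFproper_iff f).mp hf.1) ((RFproper_iff g).mp hg.1)
  · intro z hz
    obtain ⟨c, hc⟩ := RatFunc.denom_add_dvd f g
    have : (aeval z) (f.denom * g.denom) = 0 := by rw [hc, _root_.map_mul, hz, zero_mul]
    rw [_root_.map_mul, mul_eq_zero] at this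
    rcases this with h | h
    · exact hf.2 z h
    · exact hg.2 z h

lemma RFstable_mul {f g : RF} (hf : RFstable f) (hg : RFstable g) : RFstable (f * g) := by
  constructor
  · rw [RFproper_iff]
    by_cases hf0 : f = 0
    · simp [hf0]
    by_cases hg0 : g = 0
    · simp [hg0]
    rw [RatFunc.intDegree_mul hf0 hg0]
    exact add_nonpos ((RFproper_iff f).mp hf.1) ((RFproper_iff g).mp hg.1)
  · intro z hz
    obtain ⟨c, hc⟩ := RatFunc.denom_mul_dvd f g
    have : (aeval z) (f.denom * g.denom) = 0 := by rw [hc, _root_.map_mul, hz, zero_mul]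
    rw [_root_.map_mul, mul_eq_zero] at this
    rcases this with h | h
    · exact hf.2 z h
    · exact hg.2 z h

lemma RFstable_C (c : ℝ) : RFstable (RatFunc.C c) := by
  constructor
  · rw [RFproper_iff]; simp
  · intro z hz
    rw [RatFunc.denom_C] at hz
    simp at hz

lemma RFstable_neg {f : RF} (hf : RFstable f) : RFstable (-f) := by
  have : -f = RatFunc.C (-1) * f := by
    rw [map_neg, _root_.map_one, neg_mul, one_mul]
  rw [this]
  exact RFstable_mul (RFstable_C (-1)) hf

lemma RFstable_sum {ι : Type*} (s : Finset ι) (f : ι → RF) (h : ∀ i ∈ s, RFstable (f i)) :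
    RFstable (∑ i ∈ s, f i) :=
  Finset.sum_induction f RFstable (fun _ _ ha hb => RFstable_add ha hb) RFstable_zero h

variable {l n q r : Type*}

lemma MStable_add {G H : Matrix l n RF} (hG : MStable G) (hH : MStable H) :
    MStable (G + H) := fun i j => by
  simpa using RFstable_add (hG i j) (hH i j)

lemma MStable_neg {G : Matrix l n RF} (hG : MStable G) : MStable (-G) := fun i j => by
  simpa using RFstable_neg (hG i j)

lemma MStable_sub {G H : Matrix l n RF} (hG : MStable G) (hH : MStable H) :
    MStable (G - H) := by
  rw [sub_eq_add_neg]; exact MStable_add hG (MStable_neg hH)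

lemma MStable_mul [Fintype n] {G : Matrix l n RF} {H : Matrix n q RF}
    (hG : MStable G) (hH : MStable H) : MStable (G * H) := fun i j => by
  rw [Matrix.mul_apply]
  exact RFstable_sum _ _ fun k _ => RFstable_mul (hG i k) (hH k j)

lemma MStable_zero : MStable (0 : Matrix l n RF) := fun _ _ => RFstable_zero

lemma MStable_one [DecidableEq l] : MStable (1 : Matrix l l RF) := fun i j => by
  rw [Matrix.one_apply]
  split
  · exact RFstable_one
  · exact RFstable_zero

lemma MStable_fromBlocks {A : Matrix l n RF} {B : Matrix l q RF} {C : Matrix r n RF}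
    {D : Matrix r q RF} (hA : MStable A) (hB : MStable B) (hC : MStable C)
    (hD : MStable D) : MStable (Matrix.fromBlocks A B C D) := fun i j => by
  cases i <;> cases j <;> simp [Matrix.fromBlocks] <;> first
    | exact hA _ _ | exact hB _ _ | exact hC _ _ | exact hD _ _

lemma MStable_of_fromBlocks {A : Matrix l n RF} {B : Matrix l q RF} {C : Matrix r n RF}
    {D : Matrix r q RF} (h : MStable (Matrix.fromBlocks A B C D)) :
    MStable A ∧ MStable B ∧ MStable C ∧ MStable D :=
  ⟨fun i j => by simpa using h (Sum.inl i) (Sum.inl j),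
   fun i j => by simpa using h (Sum.inl i) (Sum.inr j),
   fun i j => by simpa using h (Sum.inr i) (Sum.inl j),
   fun i j => by simpa using h (Sum.inr i) (Sum.inr j)⟩

end AuxStable

/-- Youla parametrization of all internally stabilizing controllers. -/
theorem stmt_2 {p m : ℕ} (G : Matrix (Fin p) (Fin m) RF)
    (N Ntil : Matrix (Fin p) (Fin m) RF) (M Ytil : Matrix (Fin m) (Fin m) RF)
    (Mtil Y : Matrix (Fin p) (Fin p) RF) (X Xtil : Matrix (Fin m) (Fin p) RF)
    (hDCF : IsDCF G N Ntil M Mtil X Xtil Y Ytil)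
    (K : Matrix (Fin m) (Fin p) RF) :
    Stabilizes G K ↔
      ∃ Q : Matrix (Fin m) (Fin p) RF, MStable Q ∧
        (Y + N * Q).det ≠ 0 ∧ (Ytil + Q * Ntil).det ≠ 0 ∧
        K = (X + M * Q) * (Y + N * Q)⁻¹ ∧
        K = (Ytil + Q * Ntil)⁻¹ * (Xtil + Q * Mtil) := by
  obtain ⟨hN, hNtil, hM, hMtil, hX, hXtil, hY, hYtil, hdM, hdMtil, hG1, hG2, hAB⟩ := hDCF
  set A : Matrix (Fin m ⊕ Fin p) (Fin m ⊕ Fin p) RF :=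
    Matrix.fromBlocks Ytil (-Xtil) (-Ntil) Mtil with hAdef
  set B : Matrix (Fin m ⊕ Fin p) (Fin m ⊕ Fin p) RF :=
    Matrix.fromBlocks M X N Y with hBdef
  have hBA : B * A = 1 := mul_eq_one_comm.mp hAB
  have hMti' : Mtil⁻¹ * Mtil = 1 := Matrix.nonsing_inv_mul _ (isUnit_iff_ne_zero.mpr hdMtil)
  have hMti : Mtil * Mtil⁻¹ = 1 := Matrix.mul_nonsing_inv _ (isUnit_iff_ne_zero.mpr hdMtil)
  have hMi : M * M⁻¹ = 1 := Matrix.mul_nonsing_inv _ (isUnit_iff_ne_zero.mpr hdM)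
  -- extract the eight Bezout identities
  have hAB2 : Matrix.fromBlocks (Ytil*M + (-Xtil)*N) (Ytil*X + (-Xtil)*Y)
      ((-Ntil)*M + Mtil*N) ((-Ntil)*X + Mtil*Y)
      = Matrix.fromBlocks (1 : Matrix (Fin m) (Fin m) RF) 0 0 (1 : Matrix (Fin p) (Fin p) RF) := by
    rw [← Matrix.fromBlocks_multiply, hAB, Matrix.fromBlocks_one]
  have hBA2 : Matrix.fromBlocks (M*Ytil + X*(-Ntil)) (M*(-Xtil) + X*Mtil)
      (N*Ytil + Y*(-Ntil)) (N*(-Xtil) + Y*Mtil)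
      = Matrix.fromBlocks (1 : Matrix (Fin m) (Fin m) RF) 0 0 (1 : Matrix (Fin p) (Fin p) RF) := by
    rw [← Matrix.fromBlocks_multiply, hBA, Matrix.fromBlocks_one]
  have e1 : Ytil*M = 1 + Xtil*N := by
    have h := congrArg Matrix.toBlocks₁₁ hAB2
    simp only [Matrix.toBlocks_fromBlocks₁₁] at h
    rw [Matrix.neg_mul, ← sub_eq_add_neg, sub_eq_iff_eq_add] at h
    exact h
  have e2 : Ytil*X = Xtil*Y := by
    have h := congrArg Matrix.toBlocks₁₂ hAB2
    simp only [Matrix.toBlocks_fromBlocks₁₂] at h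
    rw [Matrix.neg_mul, ← sub_eq_add_neg, sub_eq_zero] at h
    exact h
  have e3 : Ntil*M = Mtil*N := by
    have h := congrArg Matrix.toBlocks₂₁ hAB2
    simp only [Matrix.toBlocks_fromBlocks₂₁] at h
    rw [Matrix.neg_mul, neg_add_eq_zero] at h
    exact h
  have e4 : Mtil*Y = 1 + Ntil*X := by
    have h := congrArg Matrix.toBlocks₂₂ hAB2
    simp only [Matrix.toBlocks_fromBlocks₂₂] at h
    rw [Matrix.neg_mul, add_comm, ← sub_eq_add_neg, sub_eq_iff_eq_add] at h
    exact h
  have f1 : X*Ntil = M*Ytil - 1 := by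
    have h := congrArg Matrix.toBlocks₁₁ hBA2
    simp only [Matrix.toBlocks_fromBlocks₁₁] at h
    rw [Matrix.mul_neg, ← sub_eq_add_neg, sub_eq_iff_eq_add] at h
    rw [h]; abel
  have f2 : X*Mtil = M*Xtil := by
    have h := congrArg Matrix.toBlocks₁₂ hBA2
    simp only [Matrix.toBlocks_fromBlocks₁₂] at h
    rw [Matrix.mul_neg, add_comm, ← sub_eq_add_neg, sub_eq_zero] at h
    exact h
  have f3 : N*Ytil = Y*Ntil := by
    have h := congrArg Matrix.toBlocks₂₁ hBA2
    simp only [Matrix.toBlocks_fromBlocks₂₁] at h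
    rw [Matrix.mul_neg, ← sub_eq_add_neg, sub_eq_zero] at h
    exact h
  have f4 : Y*Mtil = 1 + N*Xtil := by
    have h := congrArg Matrix.toBlocks₂₂ hBA2
    simp only [Matrix.toBlocks_fromBlocks₂₂] at h
    rw [Matrix.mul_neg, add_comm, ← sub_eq_add_neg, sub_eq_iff_eq_add] at h
    exact h
  have he3' : ∀ (Q : Matrix (Fin m) (Fin p) RF), Ntil*(M*Q) = Mtil*(N*Q) := by
    intro Q
    rw [← Matrix.mul_assoc, e3, Matrix.mul_assoc]
  have hdB : B.det ≠ 0 := by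
    have h := congrArg Matrix.det hAB
    rw [Matrix.det_mul, Matrix.det_one] at h
    exact right_ne_zero_of_mul_eq_one h
  have hAst : MStable A := MStable_fromBlocks hYtil (MStable_neg hXtil) (MStable_neg hNtil) hMtil
  constructor
  · -- forward direction
    rintro ⟨hdD, hHst⟩
    set Dl : Matrix (Fin m ⊕ Fin p) (Fin m ⊕ Fin p) RF :=
      Matrix.fromBlocks (1 : Matrix (Fin m) (Fin m) RF) (-K) (-G)
        (1 : Matrix (Fin p) (Fin p) RF) with hDldef
    have hL1 : Dl * B = Matrix.fromBlocks (M - K*N) (X - K*Y)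
        (0 : Matrix (Fin p) (Fin m) RF) Mtil⁻¹ := by
      have c11 : (1 : Matrix (Fin m) (Fin m) RF) * M + -K * N = M - K*N := by
        rw [Matrix.one_mul, Matrix.neg_mul, sub_eq_add_neg]
      have c12 : (1 : Matrix (Fin m) (Fin m) RF) * X + -K * Y = X - K*Y := by
        rw [Matrix.one_mul, Matrix.neg_mul, sub_eq_add_neg]
      have c21 : -G * M + (1 : Matrix (Fin p) (Fin p) RF) * N = 0 := by
        rw [hG2, Matrix.one_mul, Matrix.neg_mul, Matrix.mul_assoc, e3, ← Matrix.mul_assoc,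
          hMti', Matrix.one_mul, neg_add_cancel]
      have c22 : -G * X + (1 : Matrix (Fin p) (Fin p) RF) * Y = Mtil⁻¹ := by
        have hYexp : Y = Mtil⁻¹ + Mtil⁻¹*(Ntil*X) := by
          have h := congrArg (fun T => Mtil⁻¹ * T) e4
          rw [← Matrix.mul_assoc, hMti', Matrix.one_mul, Matrix.mul_add, Matrix.mul_one] at h
          exact h
        rw [hG2, Matrix.one_mul, Matrix.neg_mul, Matrix.mul_assoc, hYexp]
        abel
      rw [hDldef, hBdef, Matrix.fromBlocks_multiply, c11, c12, c21, c22]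
    have hdW : (M - K*N).det ≠ 0 := by
      have h1 : (Dl*B).det = (M - K*N).det * (Mtil⁻¹).det := by
        rw [hL1, Matrix.det_fromBlocks_zero₂₁]
      have h2 : (Dl*B).det ≠ 0 := by
        rw [Matrix.det_mul]; exact mul_ne_zero hdD hdB
      rw [h1] at h2
      exact (mul_ne_zero_iff.mp h2).1
    set W : Matrix (Fin m) (Fin m) RF := (M - K*N)⁻¹ with hWdef
    have hW1 : (M - K*N)*W = 1 := Matrix.mul_nonsing_inv _ (isUnit_iff_ne_zero.mpr hdW)
    have hW2 : W*(M - K*N) = 1 := Matrix.nonsing_inv_mul _ (isUnit_iff_ne_zero.mpr hdW)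
    set Q : Matrix (Fin m) (Fin p) RF := W * (K*Y - X) with hQdef
    have hZ : (Dl * B) * (Matrix.fromBlocks W (Q*Mtil)
        (0 : Matrix (Fin p) (Fin m) RF) Mtil) = 1 := by
      have c11 : (M - K*N) * W + (X - K*Y) * (0 : Matrix (Fin p) (Fin m) RF) = 1 := by
        rw [Matrix.mul_zero, add_zero, hW1]
      have c12 : (M - K*N) * (Q*Mtil) + (X - K*Y) * Mtil = 0 := by
        rw [hQdef, ← Matrix.mul_assoc, ← Matrix.mul_assoc, hW1, Matrix.one_mul,
          ← Matrix.add_mul]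
        have h0 : (K*Y - X) + (X - K*Y) = 0 := by abel
        rw [h0, Matrix.zero_mul]
      have c21 : (0 : Matrix (Fin p) (Fin m) RF) * W
          + Mtil⁻¹ * (0 : Matrix (Fin p) (Fin m) RF) = 0 := by
        rw [Matrix.mul_zero, Matrix.zero_mul, add_zero]
      have c22 : (0 : Matrix (Fin p) (Fin m) RF) * (Q*Mtil) + Mtil⁻¹ * Mtil = 1 := by
        rw [Matrix.zero_mul, zero_add, hMti']
      rw [hL1, Matrix.fromBlocks_multiply, c11, c12, c21, c22, Matrix.fromBlocks_one]
    have hZst : MStable (Matrix.fromBlocks W (Q*Mtil) (0 : Matrix (Fin p) (Fin m) RF) Mtil) := by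
      have h1 : (Dl*B)⁻¹ = Matrix.fromBlocks W (Q*Mtil) (0 : Matrix (Fin p) (Fin m) RF) Mtil :=
        Matrix.inv_eq_right_inv hZ
      have h2 : (Dl*B)⁻¹ = A * Dl⁻¹ := by
        rw [Matrix.mul_inv_rev, Matrix.inv_eq_left_inv hAB]
      rw [← h1, h2]
      exact MStable_mul hAst hHst
    obtain ⟨hWst, hQMtst, -, -⟩ := MStable_of_fromBlocks hZst
    have hQNtil : Q*Ntil = W - Ytil := by
      have h1 : (K*Y - X)*Ntil = 1 - (M - K*N)*Ytil := by
        calc (K*Y - X)*Ntil = K*(Y*Ntil) - X*Ntil := by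
              rw [Matrix.sub_mul, Matrix.mul_assoc]
        _ = K*(N*Ytil) - (M*Ytil - 1) := by rw [f3, f1]
        _ = 1 - (M*Ytil - K*(N*Ytil)) := by abel
        _ = 1 - (M - K*N)*Ytil := by rw [Matrix.sub_mul, Matrix.mul_assoc]
      calc Q*Ntil = W*((K*Y - X)*Ntil) := by rw [hQdef, Matrix.mul_assoc]
      _ = W*(1 - (M - K*N)*Ytil) := by rw [h1]
      _ = W - (W*(M - K*N))*Ytil := by
            rw [Matrix.mul_sub, Matrix.mul_one, Matrix.mul_assoc]
      _ = W - Ytil := by rw [hW2, Matrix.one_mul]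
    have hYQNt : Ytil + Q*Ntil = W := by rw [hQNtil]; abel
    have hdYt : (Ytil + Q*Ntil).det ≠ 0 := by
      rw [hYQNt]
      have h := congrArg Matrix.det hW2
      rw [Matrix.det_mul, Matrix.det_one] at h
      exact left_ne_zero_of_mul_eq_one h
    have hMQ : M*Q - K*(N*Q) = K*Y - X := by
      have h : (M - K*N)*Q = K*Y - X := by
        rw [hQdef, ← Matrix.mul_assoc, hW1, Matrix.one_mul]
      rw [← h, Matrix.sub_mul, Matrix.mul_assoc]
    have hKYNQ : K*(Y + N*Q) = X + M*Q := by
      have h := sub_eq_sub_iff_add_eq_add.mp hMQ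
      calc K*(Y + N*Q) = K*Y + K*(N*Q) := by rw [Matrix.mul_add]
      _ = M*Q + X := h.symm
      _ = X + M*Q := add_comm _ _
    have hMtY : (Mtil - Ntil*K)*(Y + N*Q) = 1 := by
      calc (Mtil - Ntil*K)*(Y + N*Q) = Mtil*(Y + N*Q) - Ntil*(K*(Y + N*Q)) := by
            rw [Matrix.sub_mul, Matrix.mul_assoc]
      _ = Mtil*Y + Mtil*(N*Q) - (Ntil*X + Ntil*(M*Q)) := by
            rw [hKYNQ, Matrix.mul_add, Matrix.mul_add]
      _ = 1 := by rw [e4, he3' Q]; abel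
    have hdYQ : (Y + N*Q).det ≠ 0 := by
      have h := congrArg Matrix.det hMtY
      rw [Matrix.det_mul, Matrix.det_one] at h
      exact right_ne_zero_of_mul_eq_one h
    have hQMt2 : Q*Mtil = W*K - Xtil := by
      have h1 : (K*Y - X)*Mtil = K - (M - K*N)*Xtil := by
        calc (K*Y - X)*Mtil = K*(Y*Mtil) - X*Mtil := by
              rw [Matrix.sub_mul, Matrix.mul_assoc]
        _ = K*(1 + N*Xtil) - M*Xtil := by rw [f4, f2]
        _ = K - (M*Xtil - K*(N*Xtil)) := by
              rw [Matrix.mul_add, Matrix.mul_one]; abel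
        _ = K - (M - K*N)*Xtil := by rw [Matrix.sub_mul, Matrix.mul_assoc]
      calc Q*Mtil = W*((K*Y - X)*Mtil) := by rw [hQdef, Matrix.mul_assoc]
      _ = W*K - (W*(M - K*N))*Xtil := by
            rw [h1, Matrix.mul_sub, ← Matrix.mul_assoc]
      _ = W*K - Xtil := by rw [hW2, Matrix.one_mul]
    have hWK : (Ytil + Q*Ntil)*K = Xtil + Q*Mtil := by
      rw [hYQNt, hQMt2]; abel
    have hQst : MStable Q := by
      have hQeq : (Q*Mtil)*Y - (Q*Ntil)*X = Q := by
        calc (Q*Mtil)*Y - (Q*Ntil)*X = Q*(Mtil*Y) - Q*(Ntil*X) := by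
              rw [Matrix.mul_assoc Q Mtil Y, Matrix.mul_assoc Q Ntil X]
        _ = Q*(1 : Matrix (Fin p) (Fin p) RF) + Q*(Ntil*X) - Q*(Ntil*X) := by
              rw [e4, Matrix.mul_add Q (1 : Matrix (Fin p) (Fin p) RF) (Ntil*X)]
        _ = Q := by rw [Matrix.mul_one Q]; exact add_sub_cancel_right _ _
      rw [← hQeq]
      exact MStable_sub (MStable_mul hQMtst hY)
        (MStable_mul (by rw [hQNtil]; exact MStable_sub hWst hYtil) hX)
    refine ⟨Q, hQst, hdYQ, hdYt, ?_, ?_⟩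
    · rw [← hKYNQ, Matrix.mul_assoc,
        Matrix.mul_nonsing_inv _ (isUnit_iff_ne_zero.mpr hdYQ), Matrix.mul_one]
    · rw [← hWK, ← Matrix.mul_assoc,
        Matrix.nonsing_inv_mul _ (isUnit_iff_ne_zero.mpr hdYt), Matrix.one_mul]
  · -- backward direction
    rintro ⟨Q, hQ, hdY, hdYt, hK1, hK2⟩
    set Lam : Matrix (Fin m ⊕ Fin p) (Fin m ⊕ Fin p) RF :=
      Matrix.fromBlocks M (-(X + M*Q)) (-N) (Y + N*Q) with hLamdef
    set Lam' : Matrix (Fin m ⊕ Fin p) (Fin m ⊕ Fin p) RF :=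
      Matrix.fromBlocks (Ytil + Q*Ntil) (Xtil + Q*Mtil) Ntil Mtil with hLam'def
    set Dg : Matrix (Fin m ⊕ Fin p) (Fin m ⊕ Fin p) RF :=
      Matrix.fromBlocks M⁻¹ 0 0 (Y + N*Q)⁻¹ with hDgdef
    set R : Matrix (Fin m ⊕ Fin p) (Fin m ⊕ Fin p) RF :=
      Matrix.fromBlocks M 0 0 (Y + N*Q) with hRdef
    have hYQi : (Y + N*Q) * (Y + N*Q)⁻¹ = 1 :=
      Matrix.mul_nonsing_inv _ (isUnit_iff_ne_zero.mpr hdY)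
    have hMi' : M⁻¹ * M = 1 := Matrix.nonsing_inv_mul _ (isUnit_iff_ne_zero.mpr hdM)
    have hYQi' : (Y + N*Q)⁻¹ * (Y + N*Q) = 1 :=
      Matrix.nonsing_inv_mul _ (isUnit_iff_ne_zero.mpr hdY)
    have b1 : Matrix.fromBlocks (1 : Matrix (Fin m) (Fin m) RF) (-K) (-G)
        (1 : Matrix (Fin p) (Fin p) RF) = Lam * Dg := by
      have c11 : M * M⁻¹ + -(X + M*Q) * (0 : Matrix (Fin p) (Fin m) RF) = 1 := by
        rw [Matrix.mul_zero, add_zero, hMi]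
      have c12 : M * (0 : Matrix (Fin m) (Fin p) RF) + -(X + M*Q) * (Y + N*Q)⁻¹ = -K := by
        rw [Matrix.mul_zero, zero_add, hK1, Matrix.neg_mul]
      have c21 : -N * M⁻¹ + (Y + N*Q) * (0 : Matrix (Fin p) (Fin m) RF) = -G := by
        rw [Matrix.mul_zero, add_zero, hG1, Matrix.neg_mul]
      have c22 : -N * (0 : Matrix (Fin m) (Fin p) RF) + (Y + N*Q) * (Y + N*Q)⁻¹ = 1 := by
        rw [Matrix.mul_zero, zero_add, hYQi]
      rw [hLamdef, hDgdef, Matrix.fromBlocks_multiply, c11, c12, c21, c22]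
    have b2 : Lam' * Lam = 1 := by
      have c11 : (Ytil + Q*Ntil) * M + (Xtil + Q*Mtil) * -N = 1 := by
        simp only [Matrix.add_mul, Matrix.mul_neg, Matrix.mul_assoc]
        rw [e1, e3]
        abel
      have c12 : (Ytil + Q*Ntil) * -(X + M*Q) + (Xtil + Q*Mtil) * (Y + N*Q) = 0 := by
        have hYtilMQ : Ytil*(M*Q) = Q + Xtil*(N*Q) := by
          rw [← Matrix.mul_assoc, e1, Matrix.add_mul, Matrix.one_mul, Matrix.mul_assoc]
        have hQMtilY : Q*(Mtil*Y) = Q + Q*(Ntil*X) := by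
          rw [e4, Matrix.mul_add, Matrix.mul_one]
        simp only [Matrix.add_mul, Matrix.mul_add, Matrix.mul_neg, Matrix.mul_assoc]
        rw [e2, hYtilMQ, he3' Q, hQMtilY]
        abel
      have c21 : Ntil * M + Mtil * -N = 0 := by
        rw [Matrix.mul_neg, e3, add_neg_cancel]
      have c22 : Ntil * -(X + M*Q) + Mtil * (Y + N*Q) = 1 := by
        simp only [Matrix.mul_neg, Matrix.mul_add, Matrix.mul_assoc]
        rw [he3' Q, e4]
        abel
      rw [hLam'def, hLamdef, Matrix.fromBlocks_multiply, c11, c12, c21, c22,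
        Matrix.fromBlocks_one]
    have b3 : Lam * Lam' = 1 := mul_eq_one_comm.mp b2
    have hDR : Dg * R = 1 := by
      have c11 : M⁻¹ * M + (0 : Matrix (Fin m) (Fin p) RF) * (0 : Matrix (Fin p) (Fin m) RF)
          = 1 := by rw [Matrix.zero_mul, add_zero, hMi']
      have c12 : M⁻¹ * (0 : Matrix (Fin m) (Fin p) RF)
          + (0 : Matrix (Fin m) (Fin p) RF) * (Y + N*Q) = 0 := by
        rw [Matrix.mul_zero, Matrix.zero_mul, add_zero]
      have c21 : (0 : Matrix (Fin p) (Fin m) RF) * M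
          + (Y + N*Q)⁻¹ * (0 : Matrix (Fin p) (Fin m) RF) = 0 := by
        rw [Matrix.mul_zero, Matrix.zero_mul, add_zero]
      have c22 : (0 : Matrix (Fin p) (Fin m) RF) * (0 : Matrix (Fin m) (Fin p) RF)
          + (Y + N*Q)⁻¹ * (Y + N*Q) = 1 := by
        rw [Matrix.zero_mul, zero_add, hYQi']
      rw [hDgdef, hRdef, Matrix.fromBlocks_multiply, c11, c12, c21, c22, Matrix.fromBlocks_one]
    have b5 : Matrix.fromBlocks (1 : Matrix (Fin m) (Fin m) RF) (-K) (-G)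
        (1 : Matrix (Fin p) (Fin p) RF) * (R * Lam') = 1 := by
      rw [b1, Matrix.mul_assoc, ← Matrix.mul_assoc Dg R Lam', hDR, Matrix.one_mul, b3]
    constructor
    · have h := congrArg Matrix.det b5
      rw [Matrix.det_mul, Matrix.det_one] at h
      exact left_ne_zero_of_mul_eq_one h
    · rw [Matrix.inv_eq_right_inv b5]
      exact MStable_mul
        (MStable_fromBlocks hM MStable_zero MStable_zero (MStable_add hY (MStable_mul hN hQ)))
        (MStable_fromBlocks (MStable_add hYtil (MStable_mul hQ hNtil))
          (MStable_add hXtil (MStable_mul hQ hMtil)) hNtil hMtil)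

end
end

section
/- Let E_r, A_r ∈ ℝ^{n_r×n_r} with E_r invertible and every complex root λ of det(A_r − λE_r) satisfying Re λ < 0; let E, A ∈ ℝ^{n×n} with A − sE regular; let B_r ∈ ℝ^{n_r×m}, B ∈ ℝ^{n×m}, C ∈ ℝ^{p×n}, and F ∈ ℝ^{m×n} arbitrary. Define E₂₂ := diag(E_r, E), A₂₂ := [[A_r, −B_rF],[0, A]], B₂₂ := [B_r; B], C₂₂ := [0, C]. Suppose F̃ ∈ ℝ^{m×n} is such that A + BF̃ − sE is admissible and H̃ ∈ ℝ^{n×p} is such that A + H̃C − sE is admissible. Then, with F̂ := [0, F̃] ∈ ℝ^{m×(n_r+n)} and Ĥ := [0; H̃] ∈ ℝ^{(n_r+n)×p}, the pencils A₂₂ + B₂₂F̂ − sE₂₂ and A₂₂ + ĤC₂₂ − sE₂₂ are both admissible; in particular, the order-(n_r+n) realization (A₂₂ − sE₂₂, B₂₂, C₂₂) admits admissible state-feedback and output-injection matrices. -/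
open Matrix Polynomial
open scoped Kronecker

set_option synthInstance.maxHeartbeats 400000
set_option maxHeartbeats 1000000

noncomputable section

/-- The pencil A - s E as a matrix over ℝ(s). -/
def pencilRF {n : Type*} (A E : Matrix n n ℝ) : Matrix n n RF :=
  toRF A - (RatFunc.X : RF) • toRF E

/-- Admissible pencil: regular, every finite generalized eigenvalue in the open left
half-plane, and deg det(sE - A) = rank E (all infinite generalized eigenvalues have
partial multiplicity at most 1). -/
def Admissible {n : Type*} [Fintype n] [DecidableEq n] (A E : Matrix n n ℝ) : Prop :=
  (pencilRF A E).det ≠ 0 ∧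
  (∀ z : ℂ, (toC A - z • toC E).det = 0 → z.re < 0) ∧
  (Matrix.of fun i j => Polynomial.X * Polynomial.C (E i j) - Polynomial.C (A i j)).det.natDegree
    = E.rank

/-- Transfer function matrix C (sE - A)⁻¹ B + D of a descriptor realization. -/
def tfm {n p m : Type*} [Fintype n] [DecidableEq n] (E A : Matrix n n ℝ)
    (B : Matrix n m ℝ) (C : Matrix p n ℝ) (D : Matrix p m ℝ) : Matrix p m RF :=
  toRF C * ((RatFunc.X : RF) • toRF E - toRF A)⁻¹ * toRF B + toRF D


/-! Both closed-loop pencils are block upper triangular, with diagonal blocks `Ar - s Er` and an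
admissible pencil. The determinant of `s E₂₂ - A₂₂` therefore factors, so regularity and the
location of the finite eigenvalues are inherited from the two blocks. Since `Er` is invertible,
`det (s Er - Ar) = det Er · charpoly (Er⁻¹ Ar)` has degree `nr = rank Er`, and the rank of the
block-diagonal `E₂₂` is `rank Er + rank E`, so the degree condition adds up as well. -/

open Module in
lemma LinearMap.finrank_range_prodMap {K M₁ M₂ N₁ N₂ : Type*} [Field K]
    [AddCommGroup M₁] [AddCommGroup M₂] [AddCommGroup N₁] [AddCommGroup N₂]
    [Module K M₁] [Module K M₂] [Module K N₁] [Module K N₂]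
    [FiniteDimensional K N₁] [FiniteDimensional K N₂] (f : M₁ →ₗ[K] N₁) (g : M₂ →ₗ[K] N₂) :
    finrank K (range (f.prodMap g)) = finrank K (range f) + finrank K (range g) := by
  have h : range (f.prodMap g) = range ((range f).subtype.prodMap (range g).subtype) := by
    simp only [range_prodMap, Submodule.range_subtype]
  rw [h, finrank_range_of_inj ((Submodule.injective_subtype _).prodMap
    (Submodule.injective_subtype _)), finrank_prod]

lemma Matrix.rank_fromBlocks_zero_zero {l l' κ κ' K : Type*} [Fintype l'] [Fintype κ'] [Field K]
    [Fintype l] [Fintype κ] (M : Matrix l l' K) (N : Matrix κ κ' K) :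
    (fromBlocks M 0 0 N).rank = M.rank + N.rank := by
  have h : (fromBlocks M 0 0 N).mulVecLin
      = (LinearEquiv.sumArrowLequivProdArrow l κ K K).symm.toLinearMap ∘ₗ
          M.mulVecLin.prodMap N.mulVecLin ∘ₗ
          (LinearEquiv.sumArrowLequivProdArrow l' κ' K K).toLinearMap := by
    ext v (i | i) <;> simp [fromBlocks_mulVec] <;> rfl
  rw [rank, h, LinearMap.range_comp, LinearMap.range_comp, LinearEquiv.range, Submodule.map_top,
    LinearEquiv.finrank_map_eq, LinearMap.finrank_range_prodMap]
  rfl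

section Pencil

open Polynomial

variable {l κ : Type*}

def pencilPoly (A E : Matrix l l ℝ) : Matrix l l ℝ[X] :=
  Matrix.of fun i j => X * C (E i j) - C (A i j)

lemma pencilRF_eq_neg_map (A E : Matrix l l ℝ) :
    pencilRF A E = -(pencilPoly A E).map (algebraMap ℝ[X] RF) := by
  ext i j
  simp only [pencilRF, pencilPoly, toRF, Matrix.sub_apply, Matrix.smul_apply, Matrix.neg_apply,
    map_apply, of_apply, smul_eq_mul, map_sub, map_mul, RatFunc.algebraMap_eq_C,
    RatFunc.algebraMap_C, RatFunc.algebraMap_X, neg_sub]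

lemma pencilPoly_fromBlocks (P : Matrix l l ℝ) (W : Matrix l κ ℝ) (Q : Matrix κ κ ℝ)
    (S : Matrix l l ℝ) (T : Matrix κ κ ℝ) :
    pencilPoly (fromBlocks P W 0 Q) (fromBlocks S 0 0 T)
      = fromBlocks (pencilPoly P S) (-W.map C) 0 (pencilPoly Q T) := by
  ext (i | i) (j | j) <;> simp [pencilPoly]

lemma toC_sub_smul_fromBlocks (P : Matrix l l ℝ) (W : Matrix l κ ℝ) (Q : Matrix κ κ ℝ)
    (S : Matrix l l ℝ) (T : Matrix κ κ ℝ) (z : ℂ) :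
    toC (fromBlocks P W 0 Q) - z • toC (fromBlocks S 0 0 T)
      = fromBlocks (toC P - z • toC S) (toC W) 0 (toC Q - z • toC T) := by
  ext (i | i) (j | j) <;> simp [toC]

variable [Fintype l] [DecidableEq l]

lemma det_pencilRF_ne_zero_iff (A E : Matrix l l ℝ) :
    (pencilRF A E).det ≠ 0 ↔ (pencilPoly A E).det ≠ 0 := by
  rw [pencilRF_eq_neg_map, det_neg, ← RingHom.mapMatrix_apply, ← RingHom.map_det,
    mul_ne_zero_iff, map_ne_zero_iff _ (RatFunc.algebraMap_injective ℝ)]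
  simp

lemma admissible_iff (A E : Matrix l l ℝ) :
    Admissible A E ↔ (pencilPoly A E).det ≠ 0 ∧
      (∀ z : ℂ, (toC A - z • toC E).det = 0 → z.re < 0) ∧
      (pencilPoly A E).det.natDegree = E.rank := by
  rw [Admissible, det_pencilRF_ne_zero_iff]
  rfl

lemma det_pencilPoly_of_isUnit {P S : Matrix l l ℝ} (hS : IsUnit S.det) :
    (pencilPoly P S).det = C S.det * (S⁻¹ * P).charpoly := by
  have h : pencilPoly P S = S.map C * charmatrix (S⁻¹ * P) := by
    rw [charmatrix, RingHom.mapMatrix_apply, Matrix.mul_sub, ← Matrix.map_mul,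
      ← Matrix.mul_assoc, mul_nonsing_inv S hS, Matrix.one_mul]
    ext i j : 1
    simp [pencilPoly]
  rw [h, det_mul, ← RingHom.mapMatrix_apply, ← RingHom.map_det]
  rfl

end Pencil

lemma Admissible.fromBlocks {l κ : Type*} [Fintype l] [DecidableEq l] [Fintype κ] [DecidableEq κ]
    {P S : Matrix l l ℝ} (hS : IsUnit S.det)
    (hP : ∀ z : ℂ, (toC P - z • toC S).det = 0 → z.re < 0)
    {Q T : Matrix κ κ ℝ} (hQ : Admissible Q T) (W : Matrix l κ ℝ) :
    Admissible (fromBlocks P W 0 Q) (fromBlocks S 0 0 T) := by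
  rw [admissible_iff] at hQ ⊢
  obtain ⟨hQreg, hQeig, hQdeg⟩ := hQ
  have hPS : (pencilPoly P S).det = C S.det * (S⁻¹ * P).charpoly := det_pencilPoly_of_isUnit hS
  have hPreg : (pencilPoly P S).det ≠ 0 := by
    rw [hPS]
    exact mul_ne_zero (C_ne_zero.mpr hS.ne_zero) (charpoly_monic _).ne_zero
  have hPdeg : (pencilPoly P S).det.natDegree = S.rank := by
    rw [hPS, natDegree_C_mul hS.ne_zero, charpoly_natDegree_eq_dim,
      rank_of_isUnit S ((isUnit_iff_isUnit_det S).mpr hS)]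
  rw [pencilPoly_fromBlocks, det_fromBlocks_zero₂₁, rank_fromBlocks_zero_zero]
  refine ⟨mul_ne_zero hPreg hQreg, fun z hz => ?_, ?_⟩
  · rw [toC_sub_smul_fromBlocks, det_fromBlocks_zero₂₁, mul_eq_zero] at hz
    exact hz.elim (hP z) (hQeig z)
  · rw [natDegree_mul hPreg hQreg, hPdeg, hQdeg]

theorem stmt_10_general {nr n m p : ℕ}
    (Er Ar : Matrix (Fin nr) (Fin nr) ℝ) (hEr : IsUnit Er.det)
    (hAr : ∀ z : ℂ, (toC Ar - z • toC Er).det = 0 → z.re < 0)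
    (E A : Matrix (Fin n) (Fin n) ℝ)
    (Br : Matrix (Fin nr) (Fin m) ℝ) (B : Matrix (Fin n) (Fin m) ℝ)
    (C : Matrix (Fin p) (Fin n) ℝ) (F : Matrix (Fin m) (Fin n) ℝ)
    (Ftil : Matrix (Fin m) (Fin n) ℝ) (hFtil : Admissible (A + B * Ftil) E)
    (Htil : Matrix (Fin n) (Fin p) ℝ) (hHtil : Admissible (A + Htil * C) E)
    (E₂₂ : Matrix (Fin nr ⊕ Fin n) (Fin nr ⊕ Fin n) ℝ)
    (hE₂₂ : E₂₂ = Matrix.fromBlocks Er 0 0 E)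
    (A₂₂ : Matrix (Fin nr ⊕ Fin n) (Fin nr ⊕ Fin n) ℝ)
    (hA₂₂ : A₂₂ = Matrix.fromBlocks Ar (-(Br * F)) 0 A)
    (B₂₂ : Matrix (Fin nr ⊕ Fin n) (Fin m) ℝ) (hB₂₂ : B₂₂ = Matrix.fromRows Br B)
    (C₂₂ : Matrix (Fin p) (Fin nr ⊕ Fin n) ℝ) (hC₂₂ : C₂₂ = Matrix.fromCols 0 C)
    (Fhat : Matrix (Fin m) (Fin nr ⊕ Fin n) ℝ) (hFhat : Fhat = Matrix.fromCols 0 Ftil)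
    (Hhat : Matrix (Fin nr ⊕ Fin n) (Fin p) ℝ) (hHhat : Hhat = Matrix.fromRows 0 Htil) :
    Admissible (A₂₂ + B₂₂ * Fhat) E₂₂ ∧ Admissible (A₂₂ + Hhat * C₂₂) E₂₂ := by
  subst hE₂₂ hA₂₂ hB₂₂ hC₂₂ hFhat hHhat
  have hfeedback : fromBlocks Ar (-(Br * F)) 0 A + fromRows Br B * fromCols 0 Ftil
      = fromBlocks Ar (-(Br * F) + Br * Ftil) 0 (A + B * Ftil) := by
    rw [fromRows_mul_fromCols, fromBlocks_add]
    simp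
  have hinjection : fromBlocks Ar (-(Br * F)) 0 A + fromRows 0 Htil * fromCols 0 C
      = fromBlocks Ar (-(Br * F)) 0 (A + Htil * C) := by
    rw [fromRows_mul_fromCols, fromBlocks_add]
    simp
  rw [hfeedback, hinjection]
  exact ⟨hFtil.fromBlocks hEr hAr _, hHtil.fromBlocks hEr hAr _⟩

/-- the composite descriptor realization of the generalized plant's
(2,2)-block admits admissible state-feedback and output-injection matrices,
obtained by zero-padding feedbacks that are admissible for the (A, E) part. -/
theorem stmt_10 {nr n m p : ℕ}
    (Er Ar : Matrix (Fin nr) (Fin nr) ℝ) (hEr : IsUnit Er.det)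
    (hAr : ∀ z : ℂ, (toC Ar - z • toC Er).det = 0 → z.re < 0)
    (E A : Matrix (Fin n) (Fin n) ℝ) (hreg : (pencilRF A E).det ≠ 0)
    (Br : Matrix (Fin nr) (Fin m) ℝ) (B : Matrix (Fin n) (Fin m) ℝ)
    (C : Matrix (Fin p) (Fin n) ℝ) (F : Matrix (Fin m) (Fin n) ℝ)
    (Ftil : Matrix (Fin m) (Fin n) ℝ) (hFtil : Admissible (A + B * Ftil) E)
    (Htil : Matrix (Fin n) (Fin p) ℝ) (hHtil : Admissible (A + Htil * C) E)
    (E₂₂ : Matrix (Fin nr ⊕ Fin n) (Fin nr ⊕ Fin n) ℝ)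
    (hE₂₂ : E₂₂ = Matrix.fromBlocks Er 0 0 E)
    (A₂₂ : Matrix (Fin nr ⊕ Fin n) (Fin nr ⊕ Fin n) ℝ)
    (hA₂₂ : A₂₂ = Matrix.fromBlocks Ar (-(Br * F)) 0 A)
    (B₂₂ : Matrix (Fin nr ⊕ Fin n) (Fin m) ℝ) (hB₂₂ : B₂₂ = Matrix.fromRows Br B)
    (C₂₂ : Matrix (Fin p) (Fin nr ⊕ Fin n) ℝ) (hC₂₂ : C₂₂ = Matrix.fromCols 0 C)
    (Fhat : Matrix (Fin m) (Fin nr ⊕ Fin n) ℝ) (hFhat : Fhat = Matrix.fromCols 0 Ftil)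
    (Hhat : Matrix (Fin nr ⊕ Fin n) (Fin p) ℝ) (hHhat : Hhat = Matrix.fromRows 0 Htil) :
    Admissible (A₂₂ + B₂₂ * Fhat) E₂₂ ∧ Admissible (A₂₂ + Hhat * C₂₂) E₂₂ :=
  stmt_10_general Er Ar hEr hAr E A Br B C F Ftil hFtil Htil hHtil E₂₂ hE₂₂ A₂₂ hA₂₂ B₂₂ hB₂₂ C₂₂
    hC₂₂ Fhat hFhat Hhat hHhat
end
end

section
/- Let E, A ∈ ℝ^{n×n} with A − sE regular, B ∈ ℝ^{n×m}, C ∈ ℝ^{p×n}, D ∈ ℝ^{p×m}; let E_r, A_r ∈ ℝ^{n_r×n_r} with E_r invertible and every complex root λ of det(A_r − λE_r) satisfying Re λ < 0, and B_r ∈ ℝ^{n_r×m}, F ∈ ℝ^{m×n}. Define the order-(n_r+n) descriptor realization E₂₂ := diag(E_r, E), A₂₂ := [[A_r, −B_rF],[0, A]], B₂₂ := [B_r; B], C₂₂ := [0, C], and let T₂₂ := C₂₂(sE₂₂ − A₂₂)^{−1}B₂₂ + D be its transfer function matrix. Suppose H ∈ ℝ^{n×p} is such that A + HC − sE is admissible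 and that A + BF − sE is admissible. Then the eight rational matrices defined by Ỹ^ε := F(sE − (A+HC))^{−1}(−B − HD) + I_m, X̃^ε := −F(sE − (A+HC))^{−1}H, Ñ^ε := C(sE − (A+HC))^{−1}(B + HD) + D, M̃^ε := C(sE − (A+HC))^{−1}H + I_p, M^ε := F(sE − (A+BF))^{−1}B + I_m, X^ε := −F(sE − (A+BF))^{−1}H, N^ε := (C + DF)(sE − (A+BF))^{−1}B + D, Y^ε := −(C + DF)(sE − (A+BF))^{−1}H + I_p form a doubly coprime factorization over RH∞ of T₂₂; in particular T₂₂ = C(sE − A)^{−1}B + D and the DCF is realized with descriptor realizations of the same order n as the network's model rather than order n_r + n. -/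
open Matrix Polynomial
open scoped Kronecker

set_option synthInstance.maxHeartbeats 400000
set_option maxHeartbeats 1000000

noncomputable section

/-!
With `Z = sE - A`, the cascade pencil `sE₂₂ - A₂₂` is block upper triangular with invertible
diagonal blocks `sE_r - A_r` and `Z`, and `C₂₂` vanishes on the first block, so
`T₂₂ = C Z⁻¹ B + D`. The eight factors are the state-feedback / observer formulas: the
factorization and Bézout identities hold over any commutative ring as soon as `Z`, `Z - BF` and
`Z - HC` are invertible, by the resolvent identity `P⁻¹ (P - Q) Q⁻¹ = Q⁻¹ - P⁻¹`.
For stability, an entry of `C' (sE - A')⁻¹ B' + D'` is `r / det (sE - A')` with `r` built from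
the adjugate. In the row-multilinear expansion of a determinant of `sM + N` only `rank M` rows
can contribute a factor `s`, so `deg r ≤ rank E = deg det (sE - A')` by admissibility, and the
roots of the reduced denominator are finite eigenvalues of the pencil.
-/

namespace Matrix

variable {R : Type*} [CommRing R] {n m p : Type*} [Fintype n] [DecidableEq n]

theorem nonsing_inv_mul_sub_mul_nonsing_inv_mul {k : Type*} {P Q : Matrix n n R}
    (hP : IsUnit P.det) (hQ : IsUnit Q.det) (W : Matrix n k R) :
    P⁻¹ * ((P - Q) * (Q⁻¹ * W)) = Q⁻¹ * W - P⁻¹ * W := by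
  rw [Matrix.sub_mul, Matrix.mul_sub, ← Matrix.mul_assoc P⁻¹, nonsing_inv_mul _ hP,
    Matrix.one_mul, ← Matrix.mul_assoc Q, mul_nonsing_inv _ hQ, Matrix.one_mul]

variable {z : Matrix n n R} (b : Matrix n m R) (c : Matrix p n R) (d : Matrix p m R)
  (f : Matrix m n R) (h : Matrix n p R)

theorem isUnit_det_mul_nonsing_inv_mul_add_one [Fintype m] [DecidableEq m] (hz : IsUnit z.det)
    (hzf : IsUnit (z - b * f).det) : IsUnit (f * (z - b * f)⁻¹ * b + 1).det := by
  have hfactor : (z - b * f) * (1 + (z - b * f)⁻¹ * b * f) = z := by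
    rw [Matrix.mul_add, Matrix.mul_one, ← Matrix.mul_assoc, ← Matrix.mul_assoc,
      mul_nonsing_inv _ hzf, Matrix.one_mul, sub_add_cancel]
  rw [add_comm, Matrix.mul_assoc, det_one_add_mul_comm]
  apply isUnit_of_mul_isUnit_right (x := (z - b * f).det)
  rwa [← det_mul, hfactor]

theorem mul_stateFeedback_eq [Fintype m] [DecidableEq m] (hz : IsUnit z.det)
    (hzf : IsUnit (z - b * f).det) :
    (c * z⁻¹ * b + d) * (f * (z - b * f)⁻¹ * b + 1) = (c + d * f) * (z - b * f)⁻¹ * b + d := by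
  have key := nonsing_inv_mul_sub_mul_nonsing_inv_mul hz hzf b
  rw [sub_sub_cancel, Matrix.mul_assoc b] at key
  simp only [Matrix.mul_add, Matrix.add_mul, Matrix.mul_assoc, Matrix.mul_one, key,
    Matrix.mul_sub]
  abel

theorem outputInjection_mul_eq [Fintype p] [DecidableEq p] (hz : IsUnit z.det)
    (hzh : IsUnit (z - h * c).det) :
    (c * (z - h * c)⁻¹ * h + 1) * (c * z⁻¹ * b + d) = c * (z - h * c)⁻¹ * (b + h * d) + d := by
  have key := nonsing_inv_mul_sub_mul_nonsing_inv_mul hzh hz b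
  rw [sub_sub_cancel_left, Matrix.neg_mul, Matrix.mul_neg, Matrix.mul_assoc h,
    neg_eq_iff_eq_neg, neg_sub] at key
  simp only [Matrix.mul_add, Matrix.add_mul, Matrix.mul_assoc, Matrix.one_mul, key,
    Matrix.mul_sub]
  abel

theorem feedback_resolvent_identity [Fintype m] [Fintype p] {k : Type*}
    (hzf : IsUnit (z - b * f).det) (hzh : IsUnit (z - h * c).det) (W : Matrix n k R) :
    (z - h * c)⁻¹ * (h * (c * ((z - b * f)⁻¹ * W))) =
      (z - h * c)⁻¹ * (b * (f * ((z - b * f)⁻¹ * W))) - ((z - b * f)⁻¹ * W - (z - h * c)⁻¹ * W) := by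
  rw [← nonsing_inv_mul_sub_mul_nonsing_inv_mul hzh hzf W, sub_sub_sub_cancel_left,
    Matrix.sub_mul, Matrix.mul_sub]
  simp only [Matrix.mul_assoc]
  abel

theorem fromBlocks_bezout [Fintype m] [DecidableEq m] [Fintype p] [DecidableEq p]
    (hzf : IsUnit (z - b * f).det) (hzh : IsUnit (z - h * c).det) :
    fromBlocks (f * (z - h * c)⁻¹ * -(b + h * d) + 1) (-(-f * (z - h * c)⁻¹ * h))
        (-(c * (z - h * c)⁻¹ * (b + h * d) + d)) (c * (z - h * c)⁻¹ * h + 1) *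
      fromBlocks (f * (z - b * f)⁻¹ * b + 1) (-f * (z - b * f)⁻¹ * h)
        ((c + d * f) * (z - b * f)⁻¹ * b + d) (-(c + d * f) * (z - b * f)⁻¹ * h + 1) = 1 := by
  have keyb := feedback_resolvent_identity b c f h hzf hzh b
  have keyh := feedback_resolvent_identity b c f h hzf hzh h
  rw [fromBlocks_multiply, ← fromBlocks_one]
  congr 1 <;>
  · simp only [Matrix.mul_add, Matrix.add_mul, Matrix.mul_assoc, Matrix.mul_one, Matrix.one_mul,
      Matrix.neg_mul, Matrix.mul_neg, Matrix.mul_sub, keyb, keyh]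
    abel

end Matrix

section PencilDegree

variable {K : Type*} [Field K] {ι μ π : Type*} [Fintype ι] [DecidableEq ι]

theorem Matrix.det_eq_zero_of_rows_eq_of_rank_lt {M Q : Matrix ι ι K} (s : Finset ι)
    (hrank : M.rank < s.card) (hrows : ∀ i ∈ s, Q i = M i) : Q.det = 0 := by
  refine det_eq_zero_of_not_linearIndependent_rows fun hQ => ?_
  have hsub : (M.submatrix ((↑) : s → ι) id).row = (fun i => Q i) ∘ (↑) := by
    ext i j
    simp [hrows i i.2]
  have hli : LinearIndependent K (M.submatrix ((↑) : s → ι) id).row := by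
    rw [hsub]
    exact hQ.comp _ Subtype.val_injective
  have := hli.rank_matrix.symm.trans_le (M.rank_submatrix_le _ _)
  simp only [Fintype.card_coe] at this
  omega

theorem natDegree_det_X_smul_add_C_le_rank (M N : Matrix ι ι K) :
    ((X : K[X]) • M.map C + N.map C).det.natDegree ≤ M.rank := by
  let f := (detRowAlternating : (ι → K[X]) [⋀^ι]→ₗ[K[X]] K[X]).toMultilinearMap
  let rows (Q : Matrix ι ι K) : ι → ι → K[X] := fun i j => C (Q i j)
  let mixed (s : Finset ι) : Matrix ι ι K := s.piecewise M N
  have hterm (s : Finset ι) : f (s.piecewise (fun i => (X : K[X]) • rows M i) (rows N)) =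
      X ^ s.card * C (mixed s).det := by
    have hmixed : s.piecewise (fun i => (X : K[X]) • rows M i) (rows N) =
        s.piecewise (fun i => (X : K[X]) • rows (mixed s) i) (rows (mixed s)) := by
      funext i j
      by_cases hi : i ∈ s <;> simp [rows, mixed, hi, Finset.piecewise]
    rw [hmixed, MultilinearMap.map_piecewise_smul, Finset.prod_const, smul_eq_mul]
    exact congrArg _ (RingHom.map_det C (mixed s)).symm
  change (f ((fun i => (X : K[X]) • rows M i) + rows N)).natDegree ≤ _
  rw [MultilinearMap.map_add_univ]
  refine natDegree_sum_le_of_forall_le _ _ fun s _ => ?_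
  rw [hterm]
  by_cases hs : s.card ≤ M.rank
  · exact natDegree_mul_le.trans (by simpa using hs)
  · rw [Matrix.det_eq_zero_of_rows_eq_of_rank_lt (M := M) s (by omega)
        fun i hi => Finset.piecewise_eq_of_mem _ _ _ hi,
      map_zero, mul_zero, natDegree_zero]
    exact Nat.zero_le _

theorem natDegree_adjugate_X_smul_add_C_le_rank (M N : Matrix ι ι K) (a b : ι) :
    (((X : K[X]) • M.map C + N.map C).adjugate a b).natDegree ≤ M.rank := by
  have hrow : ((X : K[X]) • M.map C + N.map C).updateRow b (Pi.single a 1) =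
      (X : K[X]) • (M.updateRow b 0).map C + (N.updateRow b (Pi.single a 1)).map C := by
    ext i j
    by_cases hi : i = b
    · subst hi; by_cases hj : j = a <;> simp [hj]
    · simp [hi]
  have hM : M.updateRow b 0 = diagonal (fun i => if i = b then 0 else 1) * M := by
    ext i j
    by_cases hi : i = b <;> simp [diagonal_mul, hi]
  rw [adjugate_apply, hrow]
  refine (natDegree_det_X_smul_add_C_le_rank _ _).trans ?_
  rw [hM]
  exact rank_mul_le_right _ _

theorem natDegree_mul_adjugate_mul_apply_le_rank (M N : Matrix ι ι K) (L : Matrix π ι K)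
    (R : Matrix ι μ K) (i : π) (j : μ) :
    ((L.map C * ((X : K[X]) • M.map C + N.map C).adjugate * R.map C) i j).natDegree ≤
      M.rank := by
  rw [mul_apply]
  refine natDegree_sum_le_of_forall_le _ _ fun b _ => ?_
  rw [map_apply, mul_apply]
  refine (natDegree_mul_C_le _ _).trans (natDegree_sum_le_of_forall_le _ _ fun a _ => ?_)
  exact (natDegree_C_mul_le _ _).trans (natDegree_adjugate_X_smul_add_C_le_rank M N a b)

end PencilDegree

section toRF

variable {κ μ ν : Type*}

@[simp] lemma toRF_add (M N : Matrix κ μ ℝ) : toRF (M + N) = toRF M + toRF N :=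
  Matrix.map_add _ (map_add _) M N

@[simp] lemma toRF_neg (M : Matrix κ μ ℝ) : toRF (-M) = -toRF M :=
  Matrix.map_neg _ (map_neg _) M

@[simp] lemma toRF_zero : toRF (0 : Matrix κ μ ℝ) = 0 :=
  Matrix.map_zero _ (map_zero _)

@[simp] lemma toRF_one [DecidableEq κ] : toRF (1 : Matrix κ κ ℝ) = 1 :=
  Matrix.map_one _ (map_zero _) (map_one _)

@[simp] lemma toRF_mul [Fintype μ] (M : Matrix κ μ ℝ) (N : Matrix μ ν ℝ) :
    toRF (M * N) = toRF M * toRF N :=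
  Matrix.map_mul

lemma toRF_eq_map_map (M : Matrix κ μ ℝ) :
    toRF M = (M.map Polynomial.C).map (algebraMap ℝ[X] RF) := by
  ext i j
  simp [toRF, RatFunc.algebraMap_C]

end toRF

lemma RFstable_algebraMap_div {r q : ℝ[X]} (hq : q ≠ 0) (hdeg : r.natDegree ≤ q.natDegree)
    (hroots : ∀ z : ℂ, aeval z q = 0 → z.re < 0) :
    RFstable (algebraMap ℝ[X] RF r / algebraMap ℝ[X] RF q) := by
  set f := algebraMap ℝ[X] RF r / algebraMap ℝ[X] RF q
  refine ⟨?_, fun z hz => hroots z ?_⟩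
  · by_cases hr : r = 0
    · simp [f, hr, RFproper]
    · have hf : f.intDegree = r.natDegree - q.natDegree := by
        rw [RatFunc.intDegree_div (RatFunc.algebraMap_ne_zero hr) (RatFunc.algebraMap_ne_zero hq),
          RatFunc.intDegree_polynomial, RatFunc.intDegree_polynomial]
      rw [RatFunc.intDegree] at hf
      have hnum : f.num ≠ 0 :=
        RatFunc.num_ne_zero (div_ne_zero (RatFunc.algebraMap_ne_zero hr)
          (RatFunc.algebraMap_ne_zero hq))
      rw [RFproper, degree_eq_natDegree hnum, degree_eq_natDegree f.denom_ne_zero]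
      exact_mod_cast (by omega : f.num.natDegree ≤ f.denom.natDegree)
  · obtain ⟨t, ht⟩ := RatFunc.denom_div_dvd r q
    rw [ht, map_mul, hz, zero_mul]

section Stability

variable {ι μ π : Type*} [Fintype ι] [DecidableEq ι]

def polyPencil (E A : Matrix ι ι ℝ) : Matrix ι ι ℝ[X] :=
  of fun i j => X * Polynomial.C (E i j) - Polynomial.C (A i j)

omit [Fintype ι] [DecidableEq ι] in
lemma polyPencil_eq (E A : Matrix ι ι ℝ) :
    polyPencil E A = (X : ℝ[X]) • E.map Polynomial.C + (-A).map Polynomial.C := by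
  ext i j : 1
  simp [polyPencil, sub_eq_add_neg]

omit [Fintype ι] [DecidableEq ι] in
lemma map_polyPencil (E A : Matrix ι ι ℝ) :
    (polyPencil E A).map (algebraMap ℝ[X] RF) = (RatFunc.X : RF) • toRF E - toRF A := by
  ext i j
  simp [polyPencil, toRF, RatFunc.algebraMap_C]
  ring

lemma det_polyPencil_ne_zero {E A : Matrix ι ι ℝ} (hreg : (pencilRF A E).det ≠ 0) :
    (polyPencil E A).det ≠ 0 := by
  refine fun h => hreg ?_
  rw [pencilRF, ← neg_sub, det_neg, ← map_polyPencil, ← RingHom.mapMatrix_apply,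
    ← RingHom.map_det, h, map_zero, mul_zero]

lemma tfm_apply_eq_div {E A : Matrix ι ι ℝ} (B : Matrix ι μ ℝ) (C : Matrix π ι ℝ)
    (D : Matrix π μ ℝ) (hq : (polyPencil E A).det ≠ 0) (i : π) (j : μ) :
    tfm E A B C D i j =
      algebraMap ℝ[X] RF ((C.map Polynomial.C * (polyPencil E A).adjugate * B.map Polynomial.C) i j +
        Polynomial.C (D i j) * (polyPencil E A).det) /
      algebraMap ℝ[X] RF (polyPencil E A).det := by
  have hinv : ((RatFunc.X : RF) • toRF E - toRF A)⁻¹ =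
      (algebraMap ℝ[X] RF (polyPencil E A).det)⁻¹ •
        (polyPencil E A).adjugate.map (algebraMap ℝ[X] RF) := by
    rw [← map_polyPencil, inv_def, ← RingHom.mapMatrix_apply, ← RingHom.map_det,
      Ring.inverse_eq_inv', ← RingHom.map_adjugate, RingHom.mapMatrix_apply]
  have hq' := RatFunc.algebraMap_ne_zero hq
  rw [tfm, hinv, toRF_eq_map_map C, toRF_eq_map_map B, toRF_eq_map_map D, Matrix.mul_smul,
    Matrix.smul_mul, ← Matrix.map_mul, ← Matrix.map_mul]
  simp only [Matrix.add_apply, Matrix.smul_apply, map_apply, smul_eq_mul, map_add, map_mul]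
  field_simp

lemma det_toC_sub_smul_eq_zero {E A : Matrix ι ι ℝ} {z : ℂ}
    (hz : aeval z (polyPencil E A).det = 0) : (toC A - z • toC E).det = 0 := by
  have hmap : toC A - z • toC E = -((aeval z).toRingHom.mapMatrix (polyPencil E A)) := by
    ext i j
    simp [toC, polyPencil]
    ring
  rw [hmap, det_neg, ← RingHom.map_det]
  simp [hz]

lemma MStable_tfm_of_admissible {E A : Matrix ι ι ℝ} (B : Matrix ι μ ℝ) (C : Matrix π ι ℝ)
    (D : Matrix π μ ℝ) (hA : Admissible A E) : MStable (tfm E A B C D) := by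
  obtain ⟨hreg, hroots, hdeg : (polyPencil E A).det.natDegree = E.rank⟩ := hA
  have hq := det_polyPencil_ne_zero hreg
  intro i j
  rw [tfm_apply_eq_div B C D hq]
  refine RFstable_algebraMap_div hq ?_ fun z hz => hroots z (det_toC_sub_smul_eq_zero hz)
  have hadj := natDegree_mul_adjugate_mul_apply_le_rank E (-A) C B i j
  rw [← polyPencil_eq] at hadj
  rw [hdeg]
  exact (natDegree_add_le _ _).trans (max_le hadj ((natDegree_C_mul_le _ _).trans hdeg.le))

end Stability

section Regular

variable {κ : Type*} [Fintype κ] [DecidableEq κ]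

lemma map_charmatrix_eq (M : Matrix κ κ ℝ) :
    (charmatrix M).map (algebraMap ℝ[X] RF) = (RatFunc.X : RF) • 1 - toRF M := by
  ext i j
  by_cases hij : i = j
  · subst hij; simp [toRF, RatFunc.algebraMap_C]
  · simp [toRF, RatFunc.algebraMap_C, hij]

lemma det_pencil_ne_zero_of_isUnit_det {Er Ar : Matrix κ κ ℝ} (hEr : IsUnit Er.det) :
    ((RatFunc.X : RF) • toRF Er - toRF Ar).det ≠ 0 := by
  have hfactor : (RatFunc.X : RF) • toRF Er - toRF Ar =
      (charmatrix (Ar * Er⁻¹)).map (algebraMap ℝ[X] RF) * toRF Er := by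
    rw [map_charmatrix_eq, Matrix.sub_mul, Matrix.smul_mul, Matrix.one_mul, ← toRF_mul,
      nonsing_inv_mul_cancel_right _ _ hEr]
  rw [hfactor, det_mul, ← RingHom.mapMatrix_apply, ← RingHom.map_det, ← charpoly, toRF,
    ← RingHom.mapMatrix_apply, ← RingHom.map_det]
  exact mul_ne_zero (RatFunc.algebraMap_ne_zero (charpoly_monic _).ne_zero)
    ((_root_.map_ne_zero _).mpr hEr.ne_zero)

end Regular

section Cascade

variable {ι κ μ π : Type*} [Fintype ι] [DecidableEq ι] [Fintype κ] [DecidableEq κ] [Fintype μ]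

lemma tfm_fromBlocks_cascade (Er Ar : Matrix κ κ ℝ) (Br : Matrix κ μ ℝ) (F : Matrix μ ι ℝ)
    {E A : Matrix ι ι ℝ} (B : Matrix ι μ ℝ) (C : Matrix π ι ℝ) (D : Matrix π μ ℝ)
    (hr : IsUnit ((RatFunc.X : RF) • toRF Er - toRF Ar).det)
    (h : IsUnit ((RatFunc.X : RF) • toRF E - toRF A).det) :
    tfm (fromBlocks Er 0 0 E) (fromBlocks Ar (-(Br * F)) 0 A) (fromRows Br B) (fromCols 0 C) D =
      tfm E A B C D := by
  have hpencil : (RatFunc.X : RF) • toRF (fromBlocks Er 0 0 E) -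
        toRF (fromBlocks Ar (-(Br * F)) 0 A) =
      fromBlocks ((RatFunc.X : RF) • toRF Er - toRF Ar) (toRF Br * toRF F) 0
        ((RatFunc.X : RF) • toRF E - toRF A) := by
    ext (i | i) (j | j) <;> simp [toRF, mul_apply]
  rw [tfm, tfm, hpencil, inv_fromBlocks_zero₂₁_of_isUnit_iff _ _ _
    (iff_of_true ((isUnit_iff_isUnit_det _).mpr hr) ((isUnit_iff_isUnit_det _).mpr h))]
  simp [toRF, fromCols_map, fromRows_map, fromCols_mul_fromBlocks, fromCols_mul_fromRows]

end Cascade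

section DCF

variable {ι μ π : Type*} [Fintype ι] [DecidableEq ι] [Fintype μ] [DecidableEq μ]
  [Fintype π] [DecidableEq π]

lemma isUnit_det_pencil_of_regular {E A : Matrix ι ι ℝ} (hreg : (pencilRF A E).det ≠ 0) :
    IsUnit ((RatFunc.X : RF) • toRF E - toRF A).det := by
  rw [pencilRF, ← neg_sub, det_neg] at hreg
  exact isUnit_iff_ne_zero.mpr (right_ne_zero_of_mul hreg)

theorem isDCF_tfm {E A : Matrix ι ι ℝ} (B : Matrix ι μ ℝ) (C : Matrix π ι ℝ) (D : Matrix π μ ℝ)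
    (F : Matrix μ ι ℝ) (H : Matrix ι π ℝ) (hreg : (pencilRF A E).det ≠ 0)
    (hH : Admissible (A + H * C) E) (hF : Admissible (A + B * F) E) :
    IsDCF (tfm E A B C D)
      (tfm E (A + B * F) B (C + D * F) D) (tfm E (A + H * C) (B + H * D) C D)
      (tfm E (A + B * F) B F 1) (tfm E (A + H * C) H C 1)
      (tfm E (A + B * F) H (-F) 0) (tfm E (A + H * C) H (-F) 0)
      (tfm E (A + B * F) H (-(C + D * F)) 1) (tfm E (A + H * C) (-(B + H * D)) F 1) := by
  have hz := isUnit_det_pencil_of_regular hreg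
  have hzf := isUnit_det_pencil_of_regular hF.1
  have hzh := isUnit_det_pencil_of_regular hH.1
  simp only [toRF_add, toRF_mul, sub_add_eq_sub_sub] at hzf hzh
  have hM := isUnit_det_mul_nonsing_inv_mul_add_one (toRF B) (toRF F) hz hzf
  have hMt := isUnit_det_mul_nonsing_inv_mul_add_one (toRF H) (toRF C) hz hzh
  refine ⟨MStable_tfm_of_admissible _ _ _ hF, MStable_tfm_of_admissible _ _ _ hH,
    MStable_tfm_of_admissible _ _ _ hF, MStable_tfm_of_admissible _ _ _ hH,
    MStable_tfm_of_admissible _ _ _ hF, MStable_tfm_of_admissible _ _ _ hH,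
    MStable_tfm_of_admissible _ _ _ hF, MStable_tfm_of_admissible _ _ _ hH, ?_, ?_, ?_, ?_, ?_⟩
  all_goals simp only [tfm, toRF_add, toRF_mul, toRF_neg, toRF_one, toRF_zero,
    sub_add_eq_sub_sub, add_zero]
  · exact hM.ne_zero
  · exact hMt.ne_zero
  · rw [← mul_stateFeedback_eq _ _ _ _ hz hzf, mul_nonsing_inv_cancel_right _ _ hM]
  · rw [← outputInjection_mul_eq _ _ _ _ hz hzh, nonsing_inv_mul_cancel_left _ _ hMt]
  · exact fromBlocks_bezout _ _ _ _ _ hzf hzh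

end DCF

theorem stmt_14_general {n nr m p : ℕ} (E A : Matrix (Fin n) (Fin n) ℝ)
    (hreg : (pencilRF A E).det ≠ 0)
    (B : Matrix (Fin n) (Fin m) ℝ) (C : Matrix (Fin p) (Fin n) ℝ)
    (D : Matrix (Fin p) (Fin m) ℝ)
    (Er Ar : Matrix (Fin nr) (Fin nr) ℝ) (hEr : IsUnit Er.det)
    (Br : Matrix (Fin nr) (Fin m) ℝ) (F : Matrix (Fin m) (Fin n) ℝ)
    (E₂₂ : Matrix (Fin nr ⊕ Fin n) (Fin nr ⊕ Fin n) ℝ)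
    (hE₂₂ : E₂₂ = Matrix.fromBlocks Er 0 0 E)
    (A₂₂ : Matrix (Fin nr ⊕ Fin n) (Fin nr ⊕ Fin n) ℝ)
    (hA₂₂ : A₂₂ = Matrix.fromBlocks Ar (-(Br * F)) 0 A)
    (B₂₂ : Matrix (Fin nr ⊕ Fin n) (Fin m) ℝ) (hB₂₂ : B₂₂ = Matrix.fromRows Br B)
    (C₂₂ : Matrix (Fin p) (Fin nr ⊕ Fin n) ℝ) (hC₂₂ : C₂₂ = Matrix.fromCols 0 C)
    (T₂₂ : Matrix (Fin p) (Fin m) RF) (hT₂₂ : T₂₂ = tfm E₂₂ A₂₂ B₂₂ C₂₂ D)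
    (H : Matrix (Fin n) (Fin p) ℝ) (hH : Admissible (A + H * C) E)
    (hF : Admissible (A + B * F) E) :
    T₂₂ = tfm E A B C D ∧
    IsDCF T₂₂
      -- N^ε  := (C + DF)(sE - (A+BF))⁻¹B + D
      (tfm E (A + B * F) B (C + D * F) D)
      -- Ñ^ε  := C(sE - (A+HC))⁻¹(B + HD) + D
      (tfm E (A + H * C) (B + H * D) C D)
      -- M^ε  := F(sE - (A+BF))⁻¹B + I
      (tfm E (A + B * F) B F 1)
      -- M̃^ε  := C(sE - (A+HC))⁻¹H + I
      (tfm E (A + H * C) H C 1)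
      -- X^ε  := -F(sE - (A+BF))⁻¹H
      (tfm E (A + B * F) H (-F) 0)
      -- X̃^ε  := -F(sE - (A+HC))⁻¹H
      (tfm E (A + H * C) H (-F) 0)
      -- Y^ε  := -(C + DF)(sE - (A+BF))⁻¹H + I
      (tfm E (A + B * F) H (-(C + D * F)) 1)
      -- Ỹ^ε  := F(sE - (A+HC))⁻¹(-B - HD) + I
      (tfm E (A + H * C) (-(B + H * D)) F 1) := by
  subst hE₂₂ hA₂₂ hB₂₂ hC₂₂ hT₂₂
  rw [tfm_fromBlocks_cascade Er Ar Br F B C D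
    (isUnit_iff_ne_zero.mpr (det_pencil_ne_zero_of_isUnit_det hEr))
    (isUnit_det_pencil_of_regular hreg)]
  exact ⟨rfl, isDCF_tfm B C D F H hreg hH hF⟩

/-- a doubly coprime factorization of the composite (2,2)-block T₂₂,
realized with descriptor realizations of the same order n as the network's model
rather than order n_r + n; in particular T₂₂ = C(sE - A)⁻¹B + D. -/
theorem stmt_14 {n nr m p : ℕ} (E A : Matrix (Fin n) (Fin n) ℝ)
    (hreg : (pencilRF A E).det ≠ 0)
    (B : Matrix (Fin n) (Fin m) ℝ) (C : Matrix (Fin p) (Fin n) ℝ)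
    (D : Matrix (Fin p) (Fin m) ℝ)
    (Er Ar : Matrix (Fin nr) (Fin nr) ℝ) (hEr : IsUnit Er.det)
    (hAr : ∀ z : ℂ, (toC Ar - z • toC Er).det = 0 → z.re < 0)
    (Br : Matrix (Fin nr) (Fin m) ℝ) (F : Matrix (Fin m) (Fin n) ℝ)
    (E₂₂ : Matrix (Fin nr ⊕ Fin n) (Fin nr ⊕ Fin n) ℝ)
    (hE₂₂ : E₂₂ = Matrix.fromBlocks Er 0 0 E)
    (A₂₂ : Matrix (Fin nr ⊕ Fin n) (Fin nr ⊕ Fin n) ℝ)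
    (hA₂₂ : A₂₂ = Matrix.fromBlocks Ar (-(Br * F)) 0 A)
    (B₂₂ : Matrix (Fin nr ⊕ Fin n) (Fin m) ℝ) (hB₂₂ : B₂₂ = Matrix.fromRows Br B)
    (C₂₂ : Matrix (Fin p) (Fin nr ⊕ Fin n) ℝ) (hC₂₂ : C₂₂ = Matrix.fromCols 0 C)
    (T₂₂ : Matrix (Fin p) (Fin m) RF) (hT₂₂ : T₂₂ = tfm E₂₂ A₂₂ B₂₂ C₂₂ D)
    (H : Matrix (Fin n) (Fin p) ℝ) (hH : Admissible (A + H * C) E)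
    (hF : Admissible (A + B * F) E) :
    T₂₂ = tfm E A B C D ∧
    IsDCF T₂₂
      -- N^ε  := (C + DF)(sE - (A+BF))⁻¹B + D
      (tfm E (A + B * F) B (C + D * F) D)
      -- Ñ^ε  := C(sE - (A+HC))⁻¹(B + HD) + D
      (tfm E (A + H * C) (B + H * D) C D)
      -- M^ε  := F(sE - (A+BF))⁻¹B + I
      (tfm E (A + B * F) B F 1)
      -- M̃^ε  := C(sE - (A+HC))⁻¹H + I
      (tfm E (A + H * C) H C 1)
      -- X^ε  := -F(sE - (A+BF))⁻¹H
      (tfm E (A + B * F) H (-F) 0)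
      -- X̃^ε  := -F(sE - (A+HC))⁻¹H
      (tfm E (A + H * C) H (-F) 0)
      -- Y^ε  := -(C + DF)(sE - (A+BF))⁻¹H + I
      (tfm E (A + B * F) H (-(C + D * F)) 1)
      -- Ỹ^ε  := F(sE - (A+HC))⁻¹(-B - HD) + I
      (tfm E (A + H * C) (-(B + H * D)) F 1) :=
  stmt_14_general E A hreg B C D Er Ar hEr Br F E₂₂ hE₂₂ A₂₂ hA₂₂ B₂₂ hB₂₂ C₂₂ hC₂₂ T₂₂ hT₂₂ H hH hF

end
end

section
/- Let A₁ ∈ ℝ^{n₁×n₁} and A₂ ∈ ℝ^{n₂×n₂} be Hurwitz matrices (every eigenvalue has strictly negative real part), and let B₁ ∈ ℝ^{n₁×k}, C₁ ∈ ℝ^{q×n₁} be such that the rational matrix C₁(sI − A₁)^{−1}B₁ is identically zero. Then for all B₂ ∈ ℝ^{n₂×q}, C₂ ∈ ℝ^{k×n₂}, and D ∈ ℝ^{k×q}, the matrix [[A₁ + B₁DC₁, B₁C₂],[B₂C₁, A₂]] ∈ ℝ^{(n₁+n₂)×(n₁+n₂)} is Hurwitz. -/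
open Matrix Polynomial
open scoped Kronecker

set_option synthInstance.maxHeartbeats 400000
set_option maxHeartbeats 1000000

noncomputable section

/-- A real square matrix is Hurwitz: all complex eigenvalues (roots of the
characteristic determinant) have strictly negative real part. -/
def IsHurwitz {n : Type*} [Fintype n] [DecidableEq n] (M : Matrix n n ℝ) : Prop :=
  ∀ z : ℂ, (toC M - z • (1 : Matrix n n ℂ)).det = 0 → z.re < 0


lemma charmatrix_map_RF {n : Type*} [Fintype n] [DecidableEq n] (A : Matrix n n ℝ) :
    (charmatrix A).map (algebraMap ℝ[X] RF)
      = (RatFunc.X : RF) • (1 : Matrix n n RF) - toRF A := by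
  ext i j
  by_cases h : i = j
  · subst h
    simp [charmatrix_apply_eq, toRF, Matrix.one_apply, RatFunc.algebraMap_C]
  · simp [charmatrix_apply_ne _ _ _ h, toRF, Matrix.one_apply, h, RatFunc.algebraMap_C]

lemma det_sX_sub {n : Type*} [Fintype n] [DecidableEq n] (A : Matrix n n ℝ) :
    ((RatFunc.X : RF) • (1 : Matrix n n RF) - toRF A).det
      = algebraMap ℝ[X] RF A.charpoly := by
  rw [← charmatrix_map_RF, Matrix.charpoly, ← RingHom.mapMatrix_apply, ← RingHom.map_det]

lemma det_zero_iff_aeval {n : Type*} [Fintype n] [DecidableEq n] (A : Matrix n n ℝ) (z : ℂ) :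
    (toC A - z • (1 : Matrix n n ℂ)).det = 0 ↔ (aeval z) A.charpoly = 0 := by
  have hmap : (charmatrix A).map (aeval z) = z • (1 : Matrix n n ℂ) - toC A := by
    ext i j
    by_cases h : i = j
    · subst h; simp [charmatrix_apply_eq, toC, Matrix.one_apply]
    · simp [charmatrix_apply_ne _ _ _ h, toC, Matrix.one_apply, h]
  have h2 : (aeval z) A.charpoly = (z • (1 : Matrix n n ℂ) - toC A).det := by
    rw [Matrix.charpoly, AlgHom.map_det, AlgHom.mapMatrix_apply, hmap]
  have hne : ((-1 : ℂ)) ^ Fintype.card n ≠ 0 := pow_ne_zero _ (by norm_num)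
  rw [h2, ← neg_sub (toC A), Matrix.det_neg, mul_eq_zero]
  tauto

lemma det_sX_ne_zero {n : Type*} [Fintype n] [DecidableEq n] (A : Matrix n n ℝ) :
    ((RatFunc.X : RF) • (1 : Matrix n n RF) - toRF A).det ≠ 0 := by
  rw [det_sX_sub]
  exact (map_ne_zero_iff _ (RatFunc.algebraMap_injective ℝ)).mpr A.charpoly_monic.ne_zero


lemma toRF_mul_s16 {p m r : Type*} [Fintype m] (X : Matrix p m ℝ) (Y : Matrix m r ℝ) :
    toRF (X * Y) = toRF X * toRF Y := Matrix.map_mul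

lemma toRF_add_s16 {p m : Type*} (X Y : Matrix p m ℝ) :
    toRF (X + Y) = toRF X + toRF Y := Matrix.map_add _ (map_add _) _ _

lemma toRF_fromBlocks {p₁ p₂ m₁ m₂ : Type*}
    (A : Matrix p₁ m₁ ℝ) (B : Matrix p₁ m₂ ℝ) (C : Matrix p₂ m₁ ℝ) (D : Matrix p₂ m₂ ℝ) :
    toRF (Matrix.fromBlocks A B C D)
      = Matrix.fromBlocks (toRF A) (toRF B) (toRF C) (toRF D) :=
  Matrix.fromBlocks_map A B C D _

/-- if A₁, A₂ are Hurwitz and the transfer C₁(sI - A₁)⁻¹B₁ is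
identically zero, then the interconnected state matrix is Hurwitz. -/
theorem stmt_16 {n₁ n₂ k q : ℕ}
    (A₁ : Matrix (Fin n₁) (Fin n₁) ℝ) (hA₁ : IsHurwitz A₁)
    (A₂ : Matrix (Fin n₂) (Fin n₂) ℝ) (hA₂ : IsHurwitz A₂)
    (B₁ : Matrix (Fin n₁) (Fin k) ℝ) (C₁ : Matrix (Fin q) (Fin n₁) ℝ)
    (hzero : toRF C₁ * ((RatFunc.X : RF) • (1 : Matrix (Fin n₁) (Fin n₁) RF)
        - toRF A₁)⁻¹ * toRF B₁ = 0)
    (B₂ : Matrix (Fin n₂) (Fin q) ℝ) (C₂ : Matrix (Fin k) (Fin n₂) ℝ)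
    (D : Matrix (Fin k) (Fin q) ℝ) :
    IsHurwitz (Matrix.fromBlocks (A₁ + B₁ * D * C₁) (B₁ * C₂) (B₂ * C₁) A₂) := by
  set s : RF := RatFunc.X with hs
  set L1 : Matrix (Fin n₁) (Fin n₁) RF := s • 1 - toRF A₁ with hL1
  set L2 : Matrix (Fin n₂) (Fin n₂) RF := s • 1 - toRF A₂ with hL2
  have hd1 : L1.det ≠ 0 := det_sX_ne_zero A₁
  have hd2 : L2.det ≠ 0 := det_sX_ne_zero A₂
  have hinv1 : L1 * L1⁻¹ = 1 := Matrix.mul_nonsing_inv _ (isUnit_iff_ne_zero.mpr hd1)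
  have hinv2 : L2 * L2⁻¹ = 1 := Matrix.mul_nonsing_inv _ (isUnit_iff_ne_zero.mpr hd2)
  set M := Matrix.fromBlocks (A₁ + B₁ * D * C₁) (B₁ * C₂) (B₂ * C₁) A₂ with hM
  set Lb := Matrix.fromBlocks L1 0 0 L2 with hLb
  set Lbinv := Matrix.fromBlocks L1⁻¹ 0 0 L2⁻¹ with hLbinv
  set Bb := Matrix.fromBlocks (toRF B₁) 0 0 (toRF B₂) with hBb
  set Nb := Matrix.fromBlocks (toRF D * toRF C₁) (toRF C₂) (toRF C₁) 0 with hNb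
  have hsplit : s • (1 : Matrix (Fin n₁ ⊕ Fin n₂) (Fin n₁ ⊕ Fin n₂) RF) - toRF M
      = Lb - Bb * Nb := by
    rw [hM, hLb, hBb, hNb, Matrix.fromBlocks_multiply]
    simp only [toRF_fromBlocks, toRF_add_s16, toRF_mul_s16, Matrix.zero_mul, Matrix.mul_zero,
      add_zero, zero_add, Matrix.mul_assoc]
    ext (i | i) (j | j) <;>
      simp [Matrix.fromBlocks, hL1, hL2, Matrix.sub_apply, Matrix.add_apply,
        Matrix.one_apply] <;> ring
  have hLbmul : Lb * Lbinv = 1 := by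
    rw [hLb, hLbinv, Matrix.fromBlocks_multiply]
    simp [hinv1, hinv2, Matrix.fromBlocks_one]
  have hfact : Lb - Bb * Nb = Lb * (1 - Lbinv * (Bb * Nb)) := by
    rw [Matrix.mul_sub, Matrix.mul_one, ← Matrix.mul_assoc, hLbmul, Matrix.one_mul]
  have hz1 : toRF C₁ * (L1⁻¹ * toRF B₁) = 0 := by
    rw [← Matrix.mul_assoc]; exact hzero
  have hz2 : (toRF D * toRF C₁) * (L1⁻¹ * toRF B₁) = 0 := by
    rw [Matrix.mul_assoc, hz1, Matrix.mul_zero]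
  have hsmall : Nb * (Lbinv * Bb)
      = Matrix.fromBlocks 0 (toRF C₂ * (L2⁻¹ * toRF B₂)) 0 0 := by
    rw [hNb, hLbinv, hBb, Matrix.fromBlocks_multiply, Matrix.fromBlocks_multiply]
    simp [hz1, hz2]
  have hdet1 : (1 - Lbinv * (Bb * Nb)).det = 1 := by
    rw [show Lbinv * (Bb * Nb) = (Lbinv * Bb) * Nb from by rw [Matrix.mul_assoc],
      Matrix.det_one_sub_mul_comm, hsmall]
    have h1 : (1 : Matrix ((Fin k) ⊕ (Fin q)) ((Fin k) ⊕ (Fin q)) RF)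
        - Matrix.fromBlocks 0 (toRF C₂ * (L2⁻¹ * toRF B₂)) 0 0
        = Matrix.fromBlocks 1 (-(toRF C₂ * (L2⁻¹ * toRF B₂))) 0 1 := by
      rw [← Matrix.fromBlocks_one, sub_eq_add_neg, Matrix.fromBlocks_neg,
        Matrix.fromBlocks_add]
      simp
    rw [h1, Matrix.det_fromBlocks_zero₂₁]
    simp
  have hdetM : (s • (1 : Matrix (Fin n₁ ⊕ Fin n₂) (Fin n₁ ⊕ Fin n₂) RF) - toRF M).det
      = L1.det * L2.det := by
    rw [hsplit, hfact, Matrix.det_mul, hdet1, mul_one, hLb,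
      Matrix.det_fromBlocks_zero₂₁]
  have hcp : M.charpoly = A₁.charpoly * A₂.charpoly := by
    apply RatFunc.algebraMap_injective ℝ
    rw [_root_.map_mul, ← det_sX_sub, ← det_sX_sub, ← det_sX_sub, hdetM, hL1, hL2]
  intro z hz
  rw [det_zero_iff_aeval, hcp, _root_.map_mul, mul_eq_zero] at hz
  rcases hz with h | h
  · exact hA₁ z ((det_zero_iff_aeval A₁ z).mpr h)
  · exact hA₂ z ((det_zero_iff_aeval A₂ z).mpr h)

end
end
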